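/- Let L be a split regular Hom-Leibniz algebra with symmetric root system Λ. For any α ∈ Λ and any integers z₁, z₂, the root α∘φ^{z₁} is connected to α∘φ^{z₂}; moreover α∘φ^{z₁} is connected to −α∘φ^{z₂} whenever −α∘φ^{z₂} ∈ Λ. -/

import Mathlib

open Submodule

/-- A split regular Hom-Leibniz algebra: a vector space `L` over `K` with a bilinear
product, an algebra automorphism `φ` satisfying the Hom-Leibniz identity, together with
a distinguished abelian subalgebra `H` (with `φ|_H` given as `φH`). -/
structure SplitRegularHomLeibniz (K L : Type*) [Field K] [AddCommGroup L] [Module K L] where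
  bracket : L →ₗ[K] L →ₗ[K] L
  φ : L ≃ₗ[K] L
  leibniz : ∀ x y z : L, bracket (bracket y z) (φ x)
      = bracket (bracket y x) (φ z) + bracket (φ y) (bracket z x)
  φ_bracket : ∀ x y : L, φ (bracket x y) = bracket (φ x) (φ y)
  H : Submodule K L
  H_abelian : ∀ x ∈ H, ∀ y ∈ H, bracket x y = 0
  φH : H ≃ₗ[K] H
  φH_spec : ∀ h : H, (φH h : L) = φ h

namespace SplitRegularHomLeibniz

variable {K L : Type*} [Field K] [AddCommGroup L] [Module K L]
variable (A : SplitRegularHomLeibniz K L)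

/-- The root space associated to a linear functional `α : H → K`. -/
def rootSpace (α : Module.Dual K A.H) : Submodule K L where
  carrier := {v | ∀ h : A.H, A.bracket v h = α h • A.φ v}
  add_mem' := by
    intro a b ha hb h
    simp [map_add, ha h, hb h, smul_add]
  zero_mem' := by intro h; simp
  smul_mem' := by
    intro c a ha h
    simp only [map_smul, LinearMap.smul_apply, ha h]
    rw [smul_comm]

/-- The set of nonzero roots. -/
def roots : Set (Module.Dual K A.H) := {α | α ≠ 0 ∧ A.rootSpace α ≠ ⊥}

/-- The splitting condition : `L = H ⊕ (⊕_{α ∈ Λ} L_α)`. -/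
def IsSplit : Prop :=
  (A.H ⊔ ⨆ α ∈ A.roots, A.rootSpace α) = ⊤ ∧
  iSupIndep
    (fun i : Option A.roots => Option.elim i A.H (fun α => A.rootSpace α.1))

/-- `H` is a maximal abelian subalgebra. -/
def MaximalAbelian : Prop := ∀ H' : Submodule K L,
  (∀ x ∈ H', ∀ y ∈ H', A.bracket x y = 0) → H'.map A.φ.toLinearMap = H' →
    A.H ≤ H' → H' = A.H

/-- The map `α ↦ α ∘ φ⁻¹` on linear functionals on `H`. -/
def twist (α : Module.Dual K A.H) : Module.Dual K A.H :=
  α.comp A.φH.symm.toLinearMap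

/-- The map `α ↦ α ∘ φ^{-z}` for `z : ℤ`. -/
def ztwist (z : ℤ) (α : Module.Dual K A.H) : Module.Dual K A.H :=
  α.comp ((A.φH ^ (-z)).toLinearMap)

/-- Twisted partial sums of a chain of roots:
`s 0 = f 0`, `s (i+1) = (s i)∘φ⁻¹ + (f (i+1))∘φ⁻¹`. -/
def chainSums (f : ℕ → Module.Dual K A.H) : ℕ → Module.Dual K A.H
  | 0 => f 0
  | i + 1 => A.twist (chainSums f i + f (i + 1))

/-- `α` is connected to `β`. -/
def Connected (α β : Module.Dual K A.H) : Prop :=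
  ∃ (k : ℕ) (f : ℕ → Module.Dual K A.H),
    (∀ i ≤ k, f i ∈ A.roots) ∧
    (∃ n : ℕ, f 0 = A.twist^[n] α) ∧
    (∀ i < k, A.chainSums f i ∈ A.roots) ∧
    (∃ m : ℕ, A.chainSums f k = A.twist^[m] β ∨ A.chainSums f k = -(A.twist^[m] β))

/-- Symmetric root system. -/
def SymmetricRoots : Prop := ∀ α ∈ A.roots, -α ∈ A.roots

/-- `[L_α, L_{-α}]` as a submodule (its span). -/
def bracketSpan (α : Module.Dual K A.H) : Submodule K L :=
  Submodule.span K
    (Set.image2 (fun x y => A.bracket x y) (A.rootSpace α : Set L) (A.rootSpace (-α) : Set L))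

/-- The connection class of `α`. -/
def cls (α : Module.Dual K A.H) : Set (Module.Dual K A.H) :=
  {β | β ∈ A.roots ∧ A.Connected α β}

def I0 (α : Module.Dual K A.H) : Submodule K L := ⨆ β ∈ A.cls α, A.bracketSpan β

def Vcls (α : Module.Dual K A.H) : Submodule K L := ⨆ β ∈ A.cls α, A.rootSpace β

/-- The ideal associated to the connection class of `α`. -/
def Icls (α : Module.Dual K A.H) : Submodule K L := A.I0 α ⊔ A.Vcls α

/-- Ideals of a Hom-Leibniz algebra. -/
def IsIdeal (I : Submodule K L) : Prop :=
  (∀ x ∈ I, ∀ y : L, A.bracket x y ∈ I ∧ A.bracket y x ∈ I) ∧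
    I.map A.φ.toLinearMap = I

/-- The ideal `J` generated by the squares `[x,x]`. -/
def J : Submodule K L :=
  sInf {I : Submodule K L | A.IsIdeal I ∧ ∀ x : L, A.bracket x x ∈ I}

/-- The annihilator `Z(L)`. -/
def annihilator : Set L :=
  {x | ∀ y : L, A.bracket x y = 0 ∧ A.bracket y x = 0}


/-- The candidate ideal attached to a set of roots. -/
def IOfClass (S : Set (Module.Dual K A.H)) : Submodule K L :=
  (⨆ β ∈ S, A.bracketSpan β) ⊔ (⨆ β ∈ S, A.rootSpace β)

/-- Maximal length: every root space is one-dimensional. -/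
def MaximalLength : Prop := ∀ α ∈ A.roots, Module.finrank K (A.rootSpace α) = 1

/-- `L = [L,L]`. -/
def BracketGenerates : Prop :=
  Submodule.span K {z : L | ∃ x y : L, z = A.bracket x y} = ⊤

/-- The roots `α` with `L_α ⊆ J`. -/
def rootsJ : Set (Module.Dual K A.H) := {α ∈ A.roots | A.rootSpace α ≤ A.J}

/-- The roots `α` with `L_α ∩ J = 0`. -/
def rootsNotJ : Set (Module.Dual K A.H) := {α ∈ A.roots | A.rootSpace α ⊓ A.J = ⊥}

/-- Root-multiplicativity for split regular Hom-Leibniz algebras of maximal length. -/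
def RootMultiplicative : Prop :=
  (∀ α ∈ A.rootsNotJ, ∀ β ∈ A.rootsNotJ, A.twist α + A.twist β ∈ A.roots →
    ∃ x ∈ A.rootSpace α, ∃ y ∈ A.rootSpace β, A.bracket x y ≠ 0) ∧
  (∀ α ∈ A.rootsNotJ, ∀ γ ∈ A.rootsJ, A.twist α + A.twist γ ∈ A.rootsJ →
    ∃ x ∈ A.rootSpace α, ∃ y ∈ A.rootSpace γ, A.bracket x y ≠ 0)

/-- `α` is `¬J`-connected to `β` (both in `Λ^γ`, given by the set `S`):
there is a chain whose elements beyond the first lie in `Λ^{¬J}` and whose twisted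
partial sums lie in `Λ^γ`. -/
def NotJConnected (S : Set (Module.Dual K A.H)) (α β : Module.Dual K A.H) : Prop :=
  ∃ (k : ℕ) (f : ℕ → Module.Dual K A.H),
    (∀ i, 1 ≤ i → i ≤ k → f i ∈ A.rootsNotJ) ∧
    (∃ n : ℕ, f 0 = A.twist^[n] α) ∧
    (∀ i ≤ k, A.chainSums f i ∈ S) ∧
    (∃ m : ℕ, A.chainSums f k = A.twist^[m] β ∨ A.chainSums f k = -(A.twist^[m] β))

/-- Triviality of the Lie-annihilator `Z_Lie(L)`. -/
def LieAnnZero : Prop := ∀ x : L,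
  (∀ y ∈ A.H ⊔ ⨆ α ∈ A.rootsNotJ, A.rootSpace α,
    A.bracket x y = 0 ∧ A.bracket y x = 0) → x = 0

end SplitRegularHomLeibniz

/-!
Since `v ↦ φ v` maps `L_α` onto `L_{α∘φ⁻¹}`, the root system is stable under `α ↦ α∘φ^z`
for every `z : ℤ`. With `w = min z₁ z₂`, the root `α∘φ^w` is obtained from both `α∘φ^{z₁}`
and `α∘φ^{z₂}` by twisting `zᵢ - w ≥ 0` times, so the one-element chain `α∘φ^w` connects
them; the sign in the definition of connection takes care of `-α∘φ^{z₂}`.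
-/

namespace SplitRegularHomLeibniz

variable {K L : Type*} [Field K] [AddCommGroup L] [Module K L] (A : SplitRegularHomLeibniz K L)

lemma twist_neg (α : Module.Dual K A.H) : A.twist (-α) = -A.twist α :=
  LinearMap.neg_comp _ _

lemma iterate_twist_neg (n : ℕ) (α : Module.Dual K A.H) :
    A.twist^[n] (-α) = -A.twist^[n] α :=
  (Function.Commute.iterate_left (f := A.twist) (g := Neg.neg) A.twist_neg n) α

lemma twist_comp_zpow (α : Module.Dual K A.H) (z : ℤ) :
    A.twist (α.comp (A.φH ^ z).toLinearMap) = α.comp (A.φH ^ (z - 1)).toLinearMap := by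
  rw [zpow_sub_one]
  rfl

lemma iterate_twist_comp_zpow (α : Module.Dual K A.H) (z : ℤ) (n : ℕ) :
    A.twist^[n] (α.comp (A.φH ^ z).toLinearMap) = α.comp (A.φH ^ (z - n)).toLinearMap := by
  induction n generalizing z with
  | zero => simp
  | succ n ih =>
    rw [Function.iterate_succ_apply, twist_comp_zpow, ih]
    congr 3
    push_cast
    ring

lemma comp_zpow_eq_iterate_twist (α : Module.Dual K A.H) {w z : ℤ} (hwz : w ≤ z) :
    α.comp (A.φH ^ w).toLinearMap = A.twist^[(z - w).toNat] (α.comp (A.φH ^ z).toLinearMap) := by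
  rw [iterate_twist_comp_zpow, Int.toNat_of_nonneg (sub_nonneg.mpr hwz), sub_sub_cancel]

lemma map_mem_rootSpace_twist_iff {α : Module.Dual K A.H} {v : L} :
    A.φ v ∈ A.rootSpace (A.twist α) ↔ v ∈ A.rootSpace α := by
  have bracket_φ (h : A.H) : A.bracket (A.φ v) (A.φH h) = A.φ (A.bracket v h) := by
    rw [A.φ_bracket, A.φH_spec]
  have twist_φH (h : A.H) : A.twist α (A.φH h) = α h := by
    simp [twist]
  change (∀ h, _ = _) ↔ ∀ h, _ = _
  rw [← A.φH.toEquiv.forall_congr_right]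
  refine forall_congr' fun h => ?_
  rw [LinearEquiv.coe_toEquiv, bracket_φ, twist_φH, ← map_smul, A.φ.injective.eq_iff]

lemma twist_mem_roots_iff {α : Module.Dual K A.H} : A.twist α ∈ A.roots ↔ α ∈ A.roots := by
  have twist_eq_zero_iff : A.twist α = 0 ↔ α = 0 := by
    refine ⟨fun h => ?_, fun h => by simp [twist, h]⟩
    ext x
    simpa [twist] using congr($h (A.φH x))
  have rootSpace_ne_bot : A.rootSpace (A.twist α) ≠ ⊥ ↔ A.rootSpace α ≠ ⊥ := by
    simp only [Submodule.ne_bot_iff]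
    constructor
    · rintro ⟨w, hw, hw0⟩
      refine ⟨A.φ.symm w, ?_, by simpa using hw0⟩
      rwa [← map_mem_rootSpace_twist_iff, A.φ.apply_symm_apply]
    · rintro ⟨v, hv, hv0⟩
      exact ⟨A.φ v, A.map_mem_rootSpace_twist_iff.mpr hv, by simpa using hv0⟩
  exact and_congr (not_congr twist_eq_zero_iff) rootSpace_ne_bot

lemma comp_zpow_mem_roots {α : Module.Dual K A.H} (hα : α ∈ A.roots) (z : ℤ) :
    α.comp (A.φH ^ z).toLinearMap ∈ A.roots := by
  induction z using Int.induction_on with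
  | zero => simpa using hα
  | succ z ih => rwa [← twist_mem_roots_iff, twist_comp_zpow, add_sub_cancel_right]
  | pred z ih => rwa [← twist_comp_zpow, twist_mem_roots_iff]

lemma connected_of_eq_iterate_twist {α β γ : Module.Dual K A.H} (hγ : γ ∈ A.roots) {n m : ℕ}
    (hα : γ = A.twist^[n] α) (hβ : γ = A.twist^[m] β ∨ γ = -A.twist^[m] β) :
    A.Connected α β :=
  ⟨0, fun _ => γ, fun _ _ => hγ, ⟨n, hα⟩, fun _ h => absurd h (Nat.not_lt_zero _), ⟨m, hβ⟩⟩

end SplitRegularHomLeibniz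

open SplitRegularHomLeibniz in
theorem connected_twists_general {K L : Type*} [Field K] [AddCommGroup L] [Module K L]
    (A : SplitRegularHomLeibniz K L)
    (α : Module.Dual K A.H) (hα : α ∈ A.roots) (z₁ z₂ : ℤ) :
    A.Connected (α.comp (A.φH ^ z₁).toLinearMap) (α.comp (A.φH ^ z₂).toLinearMap) ∧
    (-(α.comp (A.φH ^ z₂).toLinearMap) ∈ A.roots →
      A.Connected (α.comp (A.φH ^ z₁).toLinearMap) (-(α.comp (A.φH ^ z₂).toLinearMap))) := by
  have hroot := A.comp_zpow_mem_roots hα (min z₁ z₂)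
  have h₁ := A.comp_zpow_eq_iterate_twist α (min_le_left z₁ z₂)
  have h₂ := A.comp_zpow_eq_iterate_twist α (min_le_right z₁ z₂)
  refine ⟨A.connected_of_eq_iterate_twist hroot h₁ (.inl h₂), fun _ => ?_⟩
  refine A.connected_of_eq_iterate_twist hroot h₁ (m := (z₂ - min z₁ z₂).toNat) (.inr ?_)
  rwa [iterate_twist_neg, neg_neg]

open SplitRegularHomLeibniz in
theorem connected_twists {K L : Type*} [Field K] [AddCommGroup L] [Module K L]
    (A : SplitRegularHomLeibniz K L)
    (hsplit : A.IsSplit) (hmax : A.MaximalAbelian)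
    (hsym : A.SymmetricRoots) (α : Module.Dual K A.H) (hα : α ∈ A.roots) (z₁ z₂ : ℤ) :
    A.Connected (α.comp (A.φH ^ z₁).toLinearMap) (α.comp (A.φH ^ z₂).toLinearMap) ∧
    (-(α.comp (A.φH ^ z₂).toLinearMap) ∈ A.roots →
      A.Connected (α.comp (A.φH ^ z₁).toLinearMap) (-(α.comp (A.φH ^ z₂).toLinearMap))) :=
  connected_twists_general A α hα z₁ z₂
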